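/- arXiv:2411.07275 — 4 statements merged into one kernel-verified Lean document; each statement's English description precedes it below -/
import Mathlib

section
/- Elimination of terminals via constraints: let α be a pattern over Σ ∪ X and r a constraint. Let α' be the pattern obtained from α by replacing every occurrence of each terminal letter a ∈ Σ by a fresh variable x_a (one fresh variable per letter, not occurring in α), and let r' be the constraint that agrees with r on the variables of α and sets r'(x_a) = {a} for each letter a ∈ Σ. Then α' is terminal-free and L_E(α, r) = L_E(α', r') and L_NE(α, r) = L_NE(α', r'). -/
/-!
A substitution for `α` becomes one for the terminal-free pattern by additionally sending each
fresh variable `ν a` to `a` (`Function.extend ν (fun a => [a]) s`, well defined because `ν` is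
injective, and agreeing with `s` on the variables of `α` because the `ν a` are fresh).
Conversely, the constraint `{[a]}` forces every valid substitution for the terminal-free
pattern to send `ν a` to `a`, so it produces the same word from both patterns.
-/

/-- Patterns over `Σ ∪ X` with variable set `X = ℕ`. -/
abbrev Pattern (σ : Type) := List (σ ⊕ ℕ)

/-- Applying a substitution (determined by its action on variables, and fixing every
terminal) to a pattern. -/
def applySub {σ : Type} (s : ℕ → List σ) : Pattern σ → List σ
  | [] => []
  | c :: p => Sum.elim (fun a => [a]) s c ++ applySub s p

/-- The set of variables occurring in a pattern. -/
def varsOf {σ : Type} (p : Pattern σ) : Set ℕ := {x | Sum.inr x ∈ p}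

/-- A substitution is `r`-valid on `p` if every variable occurring in `p` is mapped into
its constraint language. -/
def Valid {σ : Type} (r : ℕ → Set (List σ)) (p : Pattern σ) (s : ℕ → List σ) : Prop :=
  ∀ x ∈ varsOf p, s x ∈ r x

/-- The erasing constrained pattern language `L_E(p, r)`. -/
def LangE {σ : Type} (p : Pattern σ) (r : ℕ → Set (List σ)) : Set (List σ) :=
  {w | ∃ s, Valid r p s ∧ applySub s p = w}

/-- The non-erasing constrained pattern language `L_NE(p, r)`. -/
def LangNE {σ : Type} (p : Pattern σ) (r : ℕ → Set (List σ)) : Set (List σ) :=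
  {w | ∃ s, Valid r p s ∧ (∀ x ∈ varsOf p, s x ≠ []) ∧ applySub s p = w}

/-- Replace every terminal letter `a` of a pattern by the fresh variable `ν a`. -/
def eliminateTerminals {σ : Type} (ν : σ → ℕ) (α : Pattern σ) : Pattern σ :=
  α.map (Sum.elim (fun a => Sum.inr (ν a)) Sum.inr)

section EliminateTerminals

variable {σ : Type} {ν : σ → ℕ} {α : Pattern σ} {r r' : ℕ → Set (List σ)} {s : ℕ → List σ}

theorem eq_inr_of_mem_eliminateTerminals {c : σ ⊕ ℕ} (hc : c ∈ eliminateTerminals ν α) :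
    ∃ x : ℕ, c = Sum.inr x := by
  obtain ⟨d, -, rfl⟩ := List.mem_map.1 hc
  cases d with
  | inl a => exact ⟨ν a, rfl⟩
  | inr x => exact ⟨x, rfl⟩

theorem mem_varsOf_eliminateTerminals {x : ℕ} :
    x ∈ varsOf (eliminateTerminals ν α) ↔ (∃ a, Sum.inl a ∈ α ∧ x = ν a) ∨ x ∈ varsOf α := by
  simp only [varsOf, eliminateTerminals, Set.mem_ofPred_eq, List.mem_map]
  constructor
  · rintro ⟨c | y, hc, h⟩
    · exact Or.inl ⟨c, hc, (Sum.inr_injective h).symm⟩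
    · exact Or.inr (Sum.inr_injective h ▸ hc)
  · rintro (⟨a, ha, rfl⟩ | hx)
    · exact ⟨Sum.inl a, ha, rfl⟩
    · exact ⟨Sum.inr x, hx, rfl⟩

theorem varsOf_subset_varsOf_eliminateTerminals :
    varsOf α ⊆ varsOf (eliminateTerminals ν α) :=
  fun _ hx => mem_varsOf_eliminateTerminals.2 (Or.inr hx)

theorem applySub_eq_flatMap (s : ℕ → List σ) (p : Pattern σ) :
    applySub s p = p.flatMap (Sum.elim (fun a => [a]) s) := by
  induction p with
  | nil => rfl
  | cons c p ih => rw [applySub, ih, List.flatMap_cons]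

theorem applySub_eliminateTerminals {s' : ℕ → List σ}
    (hterm : ∀ a, Sum.inl a ∈ α → s' (ν a) = [a]) (hvar : ∀ x ∈ varsOf α, s' x = s x) :
    applySub s' (eliminateTerminals ν α) = applySub s α := by
  rw [applySub_eq_flatMap, applySub_eq_flatMap, eliminateTerminals, List.flatMap_map]
  refine List.flatMap_congr fun c hc => ?_
  cases c with
  | inl a => exact hterm a hc
  | inr x => exact hvar x hc

theorem extend_apply_of_mem_varsOf (hfresh : ∀ a, ν a ∉ varsOf α) (g : σ → List σ)
    {x : ℕ} (hx : x ∈ varsOf α) : Function.extend ν g s x = s x :=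
  Function.extend_apply' g s x fun ⟨a, ha⟩ => hfresh a (ha ▸ hx)

theorem applySub_eliminateTerminals_extend (hν : Function.Injective ν)
    (hfresh : ∀ a, ν a ∉ varsOf α) :
    applySub (Function.extend ν (fun a => [a]) s) (eliminateTerminals ν α) = applySub s α :=
  applySub_eliminateTerminals (fun a _ => hν.extend_apply _ s a)
    fun _ => extend_apply_of_mem_varsOf hfresh _

theorem Valid.extend_eliminateTerminals (hν : Function.Injective ν)
    (hfresh : ∀ a, ν a ∉ varsOf α) (hchar : ∀ a, r' (ν a) = {[a]})
    (hagree : ∀ x ∈ varsOf α, r' x = r x) (hs : Valid r α s) :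
    Valid r' (eliminateTerminals ν α) (Function.extend ν (fun a => [a]) s) := by
  intro x hx
  rcases mem_varsOf_eliminateTerminals.1 hx with ⟨a, -, rfl⟩ | hx
  · rw [hchar, hν.extend_apply]
    rfl
  · rw [hagree x hx, extend_apply_of_mem_varsOf hfresh _ hx]
    exact hs x hx

theorem extend_ne_nil_of_ne_nil (hν : Function.Injective ν) (hfresh : ∀ a, ν a ∉ varsOf α)
    (hne : ∀ x ∈ varsOf α, s x ≠ []) :
    ∀ x ∈ varsOf (eliminateTerminals ν α), Function.extend ν (fun a => [a]) s x ≠ [] := by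
  intro x hx
  rcases mem_varsOf_eliminateTerminals.1 hx with ⟨a, -, rfl⟩ | hx
  · rw [hν.extend_apply]
    exact List.cons_ne_nil a []
  · rw [extend_apply_of_mem_varsOf hfresh _ hx]
    exact hne x hx

theorem Valid.of_eliminateTerminals (hagree : ∀ x ∈ varsOf α, r' x = r x)
    (hs : Valid r' (eliminateTerminals ν α) s) : Valid r α s :=
  fun x hx => hagree x hx ▸ hs x (varsOf_subset_varsOf_eliminateTerminals hx)

theorem Valid.applySub_eliminateTerminals (hchar : ∀ a, r' (ν a) = {[a]})
    (hs : Valid r' (eliminateTerminals ν α) s) :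
    applySub s (eliminateTerminals ν α) = applySub s α :=
  _root_.applySub_eliminateTerminals
    (fun a ha => Set.mem_singleton_iff.1 <|
      hchar a ▸ hs (ν a) (mem_varsOf_eliminateTerminals.2 (Or.inl ⟨a, ha, rfl⟩)))
    fun _ _ => rfl

end EliminateTerminals

theorem eliminate_terminals_via_constraints_general
    (σ : Type) (α : Pattern σ) (r : ℕ → Set (List σ))
    (ν : σ → ℕ) (hν : Function.Injective ν) (hfresh : ∀ a : σ, ν a ∉ varsOf α)
    (r' : ℕ → Set (List σ))
    (hr'char : ∀ a : σ, r' (ν a) = {[a]})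
    (hr'agree : ∀ x ∈ varsOf α, r' x = r x) :
    (∀ c ∈ eliminateTerminals ν α, ∃ x : ℕ, c = Sum.inr x) ∧
    LangE α r = LangE (eliminateTerminals ν α) r' ∧
    LangNE α r = LangNE (eliminateTerminals ν α) r' := by
  refine ⟨fun _ => eq_inr_of_mem_eliminateTerminals, ?_, ?_⟩ <;> ext w <;> constructor
  · rintro ⟨s, hs, rfl⟩
    exact ⟨_, hs.extend_eliminateTerminals hν hfresh hr'char hr'agree,
      applySub_eliminateTerminals_extend hν hfresh⟩
  · rintro ⟨s, hs, rfl⟩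
    exact ⟨s, hs.of_eliminateTerminals hr'agree, (hs.applySub_eliminateTerminals hr'char).symm⟩
  · rintro ⟨s, hs, hne, rfl⟩
    exact ⟨_, hs.extend_eliminateTerminals hν hfresh hr'char hr'agree,
      extend_ne_nil_of_ne_nil hν hfresh hne, applySub_eliminateTerminals_extend hν hfresh⟩
  · rintro ⟨s, hs, hne, rfl⟩
    exact ⟨s, hs.of_eliminateTerminals hr'agree,
      fun x hx => hne x (varsOf_subset_varsOf_eliminateTerminals hx),
      (hs.applySub_eliminateTerminals hr'char).symm⟩

/-- Elimination of terminals via constraints: replacing each terminal letter `a` by a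
fresh variable `x_a` constrained to `{a}` (one fresh variable per letter) yields a
terminal-free pattern with the same erasing and non-erasing constrained languages. -/
theorem eliminate_terminals_via_constraints
    (σ : Type) [Fintype σ] (α : Pattern σ) (r : ℕ → Set (List σ))
    (ν : σ → ℕ) (hν : Function.Injective ν) (hfresh : ∀ a : σ, ν a ∉ varsOf α)
    (r' : ℕ → Set (List σ))
    (hr'char : ∀ a : σ, r' (ν a) = {[a]})
    (hr'agree : ∀ x ∈ varsOf α, r' x = r x) :
    (∀ c ∈ eliminateTerminals ν α, ∃ x : ℕ, c = Sum.inr x) ∧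
    LangE α r = LangE (eliminateTerminals ν α) r' ∧
    LangNE α r = LangNE (eliminateTerminals ν α) r' :=
  eliminate_terminals_via_constraints_general σ α r ν hν hfresh r' hr'char hr'agree
end

section
/- Let Σ = {0,#}, K = ({00})* (all words that are concatenations of blocks 00), Y₁ = { 0w0#0 : w ∈ Σ*, w has no factor ### }, Y₂ = { 0⁴ # 0⁵ 0^{2a} ## 0^{b} # 0⁴ 0^{2+2c} : a ≥ 0, b ≥ 1, c ≥ 1 }, Y₃ = { 0#0w0 : w ∈ Σ*, w has no factor ### }, and let L_G be the language of the regular expression (## 0 0* # 0⁵ (00)* # 0⁵ (00)*)⁺ ##. Then the following six concatenation languages are all disjoint from L_G: Y₁·K·K, K·Y₂·K, K·K·Y₃, Y₁·K·Y₂·K, Y₁·K·K·Y₃, and K·Y₂·K·Y₃. -/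
open Computability

/-- The binary alphabet `{0, #}`: `false` represents `0`, `true` represents `#`. -/
abbrev Bin := Bool

/-- `u` contains no occurrence of `###` as a factor. -/
def NoTripleHash (u : List Bin) : Prop := ¬ ([true, true, true] <:+: u)

/-- `K = ({00})*`: all words that are concatenations of blocks `00`. -/
def K : Language Bin := ({[false, false]} : Language Bin)∗

/-- `Y₁ = { 0w0#0 : w ∈ Σ*, w has no factor ### }`. -/
def Y1 : Language Bin :=
  {x | ∃ w, NoTripleHash w ∧ x = [false] ++ w ++ [false, true, false]}

/-- `Y₂ = { 0⁴ # 0⁵ 0^{2a} ## 0^{b} # 0⁴ 0^{2+2c} : a ≥ 0, b ≥ 1, c ≥ 1 }`. -/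
def Y2 : Language Bin :=
  {x | ∃ a b c : ℕ, 1 ≤ b ∧ 1 ≤ c ∧
    x = List.replicate 4 false ++ [true] ++ List.replicate 5 false ++
      List.replicate (2 * a) false ++ [true, true] ++ List.replicate b false ++
      [true] ++ List.replicate 4 false ++ List.replicate (2 + 2 * c) false}

/-- `Y₃ = { 0#0w0 : w ∈ Σ*, w has no factor ### }`. -/
def Y3 : Language Bin :=
  {x | ∃ w, NoTripleHash w ∧ x = [false, true, false] ++ w ++ [false]}

/-- The regular expression `0` (a single letter `0`). -/
def rZero : RegularExpression Bin := RegularExpression.char false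

/-- The regular expression `#` (a single letter `#`). -/
def rHash : RegularExpression Bin := RegularExpression.char true

/-- The regular expression `0⁵`. -/
def rZero5 : RegularExpression Bin := rZero * rZero * rZero * rZero * rZero

/-- The regular expression for one block `## 0 0* # 0⁵ (00)* # 0⁵ (00)*`. -/
def rBlock : RegularExpression Bin :=
  rHash * rHash * rZero * rZero.star * rHash * rZero5 * (rZero * rZero).star *
    rHash * rZero5 * (rZero * rZero).star

/-- The language `L_G` of the regular expression `(## 0 0* # 0⁵ (00)* # 0⁵ (00)*)⁺ ##`. -/
def LG : Language Bin := (rBlock * rBlock.star * rHash * rHash).matches'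

/-!
Every word of `L_G` begins with `#`, whereas every word of `K`, `Y₁`, `Y₂` and `Y₃` (the empty
word included) does not, and neither property is lost under concatenation.
-/

theorem List.head?_append_ne_some {α : Type*} {u v : List α} {a : α} (hu : u.head? ≠ some a)
    (hv : v.head? ≠ some a) : (u ++ v).head? ≠ some a := by
  cases u <;> simp_all

namespace Language

variable {α : Type*}

def startingWith (a : α) : Language α := {w | w.head? = some a}

theorem disjoint_startingWith_iff {L : Language α} {a : α} :
    Disjoint L (startingWith a) ↔ ∀ w ∈ L, w.head? ≠ some a :=
  Set.disjoint_left

theorem mul_le_startingWith {L : Language α} {a : α} (hL : L ≤ startingWith a)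
    (M : Language α) : L * M ≤ startingWith a := by
  rintro _ ⟨u, hu, v, -, rfl⟩
  cases u with
  | nil => exact absurd (hL hu) (by simp [startingWith])
  | cons b u => exact (hL hu : (b :: u).head? = some a)

theorem disjoint_startingWith_mul {L M : Language α} {a : α}
    (hL : Disjoint L (startingWith a)) (hM : Disjoint M (startingWith a)) :
    Disjoint (L * M) (startingWith a) := by
  rw [disjoint_startingWith_iff] at *
  rintro _ ⟨u, hu, v, hv, rfl⟩
  exact List.head?_append_ne_some (hL u hu) (hM v hv)

theorem disjoint_startingWith_kstar {L : Language α} {a : α}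
    (hL : Disjoint L (startingWith a)) : Disjoint L∗ (startingWith a) := by
  rw [disjoint_startingWith_iff] at *
  rintro _ ⟨ws, rfl, hws⟩
  induction ws with
  | nil => simp
  | cons u ws ih =>
    exact List.head?_append_ne_some (hL u (hws u (by simp))) (ih fun w hw ↦ hws w (by simp [hw]))

end Language

open Language

theorem LG_le_startingWith_true : LG ≤ startingWith true := by
  have hHash : rHash.matches' ≤ startingWith true := by
    rintro _ rfl
    rfl
  simp only [LG, rBlock, RegularExpression.matches'_mul]
  repeat apply mul_le_startingWith
  exact hHash

theorem K_disjoint_startingWith_true : Disjoint K (startingWith true) :=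
  disjoint_startingWith_kstar <| disjoint_startingWith_iff.2 <| by rintro _ rfl; simp

theorem Y1_disjoint_startingWith_true : Disjoint Y1 (startingWith true) :=
  disjoint_startingWith_iff.2 <| by rintro _ ⟨w, -, rfl⟩; simp

theorem Y2_disjoint_startingWith_true : Disjoint Y2 (startingWith true) :=
  disjoint_startingWith_iff.2 <| by rintro _ ⟨a, b, c, -, -, rfl⟩; simp

theorem Y3_disjoint_startingWith_true : Disjoint Y3 (startingWith true) :=
  disjoint_startingWith_iff.2 <| by rintro _ ⟨w, -, rfl⟩; simp

/-- The six concatenation languages arising from partially-erased substitutions of the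
counter-increase predicate are all disjoint from `L_G`. -/
theorem predicate_partial_erasures_disjoint_from_LG :
    Disjoint (Y1 * K * K) LG ∧ Disjoint (K * Y2 * K) LG ∧ Disjoint (K * K * Y3) LG ∧
    Disjoint (Y1 * K * Y2 * K) LG ∧ Disjoint (Y1 * K * K * Y3) LG ∧
    Disjoint (K * Y2 * K * Y3) LG := by
  have hK := K_disjoint_startingWith_true
  have h1 := Y1_disjoint_startingWith_true
  have h2 := Y2_disjoint_startingWith_true
  have h3 := Y3_disjoint_startingWith_true
  refine ⟨?_, ?_, ?_, ?_, ?_, ?_⟩ <;> refine Disjoint.mono_right LG_le_startingWith_true ?_ <;>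
    repeat' first | assumption | apply disjoint_startingWith_mul
end

section
/- Correctness of the counter-increase predicate: let Σ = {0,#} and let u ∈ Σ* contain no occurrence of ### as a factor. Suppose u contains a factor of the form 0 # 0^{5+2t} # 0^{5+2a} ## 0^{1+j} # 0^{5+2t} 0^{2+2c} # 0 0 for some t, a, j ≥ 0 and c ≥ 1 (this corresponds to a step in which the first counter is increased by c+1 ≥ 2, i.e., by more than one). Then there exist words w₁ ∈ { 0w0#0 : w ∈ Σ*, w has no factor ### }, w₂ ∈ ({00})*, w₃ ∈ { 0⁴ # 0⁵ 0^{2a'} ## 0^{b'} # 0⁴ 0^{2+2c'} : a' ≥ 0, b' ≥ 1, c' ≥ 1 }, and w₅ ∈ { 0#0w0 : w ∈ Σ*, w has no factor ### } such that 0u0 = w₁ w₂ w₃ w₂ w₅ (the two occurrences of w₂ being the same word, corresponding to the repeated variable x₁ in the predicate pattern γ = y₁ x₁ y₂ x₁ y₃). -/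
open Computability

/-- The factor `0 # 0^{5+2t} # 0^{5+2a} ## 0^{1+j} # 0^{5+2t} 0^{2+2c} # 0 0`,
corresponding to a step in which the first counter is increased by `c + 1 ≥ 2`. -/
def badIncreaseFactor (t a j c : ℕ) : List Bin :=
  [false, true] ++ List.replicate (5 + 2 * t) false ++ [true] ++
    List.replicate (5 + 2 * a) false ++ [true, true] ++
    List.replicate (1 + j) false ++ [true] ++ List.replicate (5 + 2 * t) false ++
    List.replicate (2 + 2 * c) false ++ [true, false, false]

lemma replicate_even_mem_K (t : ℕ) : List.replicate (2 * t) (false : Bin) ∈ K := by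
  rw [K, Language.mem_kstar]
  refine ⟨List.replicate t [false, false], ?_, ?_⟩
  · induction t with
    | zero => rfl
    | succ n ih =>
        rw [List.replicate_succ, List.flatten_cons, ← ih,
          show 2 * (n+1) = 2 + 2*n by omega, List.replicate_add]
        rfl
  · intro y hy
    rw [List.eq_of_mem_replicate hy]
    rfl

lemma keyeq (t a j c : ℕ) (z : List Bin) :
    badIncreaseFactor t a j c ++ z ++ [false] =
      [false, true, false] ++ List.replicate (2 * t) false ++
      (List.replicate 4 false ++ [true] ++ List.replicate 5 false ++
        List.replicate (2 * a) false ++ [true, true] ++ List.replicate (1 + j) false ++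
        [true] ++ List.replicate 4 false ++ List.replicate (2 + 2 * c) false) ++
      List.replicate (2 * t) false ++
      ([false, true, false] ++ ([false] ++ z) ++ [false]) := by
  have e1 : List.replicate (5 + 2 * t) (false : Bin)
      = false :: (List.replicate (2 * t) false ++ List.replicate 4 false) := by
    rw [show 5 + 2 * t = 1 + (2 * t + 4) by omega, List.replicate_add, List.replicate_add]
    rfl
  have e2 : List.replicate (5 + 2 * a) (false : Bin)
      = List.replicate 5 false ++ List.replicate (2 * a) false := List.replicate_add ..
  have e3 : ∀ T : List Bin,
      List.replicate (5 + 2 * t) (false : Bin) ++ (List.replicate (2 + 2 * c) false ++ T)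
      = List.replicate 4 false ++ (List.replicate (2 + 2 * c) false ++
          (List.replicate (2 * t) false ++ (false :: T))) := by
    intro T
    have h : List.replicate ((5 + 2 * t) + (2 + 2 * c)) (false : Bin)
        = List.replicate 4 false ++ (List.replicate (2 + 2 * c) false ++
            (List.replicate (2 * t) false ++ List.replicate 1 false)) := by
      rw [show (5 + 2 * t) + (2 + 2 * c) = 4 + ((2 + 2 * c) + (2 * t + 1)) by omega]
      simp [List.replicate_add, List.append_assoc]
    rw [← List.append_assoc, ← List.replicate_add, h]
    simp only [List.append_assoc, List.replicate_one, List.singleton_append]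
  simp only [badIncreaseFactor, List.append_assoc, List.cons_append, List.nil_append,
    List.singleton_append]
  rw [e3, e2]
  nth_rewrite 1 [e1]
  simp

/-- Correctness of the counter-increase predicate: if `u` has no factor `###` and
contains a factor witnessing an increase of the first counter by more than one, then
`0u0` decomposes as `w₁ w₂ w₃ w₂ w₅` with `w₁ ∈ Y₁`, `w₂ ∈ K`, `w₃ ∈ Y₂`, `w₅ ∈ Y₃`
(the two occurrences of `w₂` being the same word). -/
theorem counterIncrease_predicate_correct
    (u : List Bin) (hu : NoTripleHash u)
    (t a j c : ℕ) (hc : 1 ≤ c)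
    (hfac : badIncreaseFactor t a j c <:+: u) :
    ∃ w₁ w₂ w₃ w₅ : List Bin,
      w₁ ∈ Y1 ∧ w₂ ∈ K ∧ w₃ ∈ Y2 ∧ w₅ ∈ Y3 ∧
      [false] ++ u ++ [false] = w₁ ++ w₂ ++ w₃ ++ w₂ ++ w₅ := by
  obtain ⟨x, z, hxz⟩ := hfac
  refine ⟨[false] ++ x ++ [false, true, false],
    List.replicate (2 * t) false,
    List.replicate 4 false ++ [true] ++ List.replicate 5 false ++
      List.replicate (2 * a) false ++ [true, true] ++ List.replicate (1 + j) false ++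
      [true] ++ List.replicate 4 false ++ List.replicate (2 + 2 * c) false,
    [false, true, false] ++ ([false] ++ z) ++ [false], ?_, ?_, ?_, ?_, ?_⟩
  · exact ⟨x, fun h => hu (h.trans ⟨[], badIncreaseFactor t a j c ++ z,
      by simp [← List.append_assoc, hxz]⟩), rfl⟩
  · exact replicate_even_mem_K t
  · exact ⟨a, 1 + j, c, by omega, hc, rfl⟩
  · refine ⟨[false] ++ z, fun h => hu ?_, rfl⟩
    refine h.trans ⟨x ++ ([false, true] ++ List.replicate (5 + 2 * t) false ++ [true] ++
      List.replicate (5 + 2 * a) false ++ [true, true] ++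
      List.replicate (1 + j) false ++ [true] ++ List.replicate (5 + 2 * t) false ++
      List.replicate (2 + 2 * c) false ++ [true, false]), [], ?_⟩
    subst hxz
    simp [badIncreaseFactor]
  · subst hxz
    have := keyeq t a j c z
    simp only [List.append_assoc] at this ⊢
    rw [this]
end

section
/- No word producible by the counter-increase predicate contains ### as a factor: let Σ = {0,#}, and let L(y₁) = {ε} ∪ { 0w0#0 : w ∈ Σ*, w has no factor ### }, L(y₂) = {ε} ∪ { 0⁴ # 0⁵ 0^{2a} ## 0^{b} # 0⁴ 0^{2+2c} : a ≥ 0, b ≥ 1, c ≥ 1 }, L(y₃) = {ε} ∪ { 0#0w0 : w ∈ Σ*, w has no factor ### }, and L(x₁) = ({00})*. Then every word in the concatenation language L(y₁)·L(x₁)·L(y₂)·L(x₁)·L(y₃) contains no occurrence of ### as a factor. -/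
open Computability

/-- `L(x₁) = ({00})*`: all words that are concatenations of blocks `00`. -/
def Lx1 : Language Bin := ({[false, false]} : Set (List Bin))∗

/-- `L(y₁) = {ε} ∪ { 0w0#0 : w ∈ Σ*, w has no factor ### }`. -/
def Ly1 : Language Bin :=
  (({[]} : Set (List Bin)) ∪ {x | ∃ w, NoTripleHash w ∧ x = [false] ++ w ++ [false, true, false]} : Set (List Bin))

/-- `L(y₂) = {ε} ∪ { 0⁴ # 0⁵ 0^{2a} ## 0^{b} # 0⁴ 0^{2+2c} : a ≥ 0, b ≥ 1, c ≥ 1 }`. -/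
def Ly2 : Language Bin :=
  (({[]} : Set (List Bin)) ∪ {x | ∃ a b c : ℕ, 1 ≤ b ∧ 1 ≤ c ∧
    x = List.replicate 4 false ++ [true] ++ List.replicate 5 false ++
      List.replicate (2 * a) false ++ [true, true] ++ List.replicate b false ++
      [true] ++ List.replicate 4 false ++ List.replicate (2 + 2 * c) false} : Set (List Bin))

/-- `L(y₃) = {ε} ∪ { 0#0w0 : w ∈ Σ*, w has no factor ### }`. -/
def Ly3 : Language Bin :=
  (({[]} : Set (List Bin)) ∪ {x | ∃ w, NoTripleHash w ∧ x = [false, true, false] ++ w ++ [false]} : Set (List Bin))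

/-!
Each of the five languages consists of `###`-free words that are empty or begin with `0`, and
this class is closed under concatenation: a `###` straddling the junction of `u ++ v` would
have to contain the leading `0` of `v`.
-/

theorem List.infix_append_cons_iff_of_notMem {α : Type*} {l xs ys : List α} {a : α}
    (ha : a ∉ l) : l <:+: xs ++ a :: ys ↔ l <:+: xs ∨ l <:+: ys := by
  refine ⟨fun h => ?_, fun h => h.elim List.infix_append_of_infix_left
    (fun h => List.infix_append_of_infix_right (List.infix_cons h))⟩
  rcases List.infix_append_iff.mp h with h | h | ⟨l₁, l₂, rfl, hl₁, hl₂⟩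
  · exact Or.inl h
  · rcases List.infix_cons_iff.mp h with h | h
    · rcases List.prefix_cons_iff.mp h with rfl | ⟨t, rfl, -⟩
      · exact Or.inr List.nil_infix
      · simp at ha
    · exact Or.inr h
  · rcases List.prefix_cons_iff.mp hl₂ with rfl | ⟨t, rfl, -⟩
    · exact Or.inl (by simpa using hl₁.isInfix)
    · simp at ha

instance : DecidablePred NoTripleHash :=
  fun u => inferInstanceAs (Decidable ¬([true, true, true] <:+: u))

theorem noTripleHash_append_false_cons {u v : List Bin} :
    NoTripleHash (u ++ false :: v) ↔ NoTripleHash u ∧ NoTripleHash v := by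
  simp only [NoTripleHash, not_or,
    List.infix_append_cons_iff_of_notMem (by decide : false ∉ [true, true, true])]

theorem noTripleHash_replicate_false (n : ℕ) : NoTripleHash (List.replicate n false) :=
  fun h => by simpa using List.eq_of_mem_replicate (h.subset (List.mem_cons_self ..))

def Lsafe : Language Bin := {w | NoTripleHash w ∧ w.head? ≠ some true}

theorem noTripleHash_append_of_mem_lsafe {u v : List Bin} (hu : NoTripleHash u)
    (hv : v ∈ Lsafe) : NoTripleHash (u ++ v) := by
  obtain ⟨hv, hhead⟩ := hv
  match v, hhead with
  | [], _ => simpa using hu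
  | false :: v, _ => exact noTripleHash_append_false_cons.mpr ⟨hu, hv ∘ List.infix_cons⟩

theorem append_mem_lsafe {u v : List Bin} (hu : u ∈ Lsafe) (hv : v ∈ Lsafe) :
    u ++ v ∈ Lsafe := by
  refine ⟨noTripleHash_append_of_mem_lsafe hu.1 hv, ?_⟩
  cases u
  · exact hv.2
  · simpa using hu.2

theorem mul_le_lsafe {A B : Language Bin} (hA : A ≤ Lsafe) (hB : B ≤ Lsafe) :
    A * B ≤ Lsafe := by
  rintro _ ⟨u, hu, v, hv, rfl⟩
  exact append_mem_lsafe (hA hu) (hB hv)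

theorem one_le_lsafe : 1 ≤ Lsafe := by
  rintro _ rfl
  exact ⟨by decide, by simp⟩

theorem replicate_false_append_mem_lsafe {n : ℕ} (hn : 0 < n) {h : List Bin}
    (hh : NoTripleHash h) : List.replicate n false ++ h ∈ Lsafe := by
  obtain ⟨n, rfl⟩ := Nat.exists_eq_add_one_of_ne_zero hn.ne'
  refine ⟨?_, by simp [List.replicate_succ]⟩
  rw [List.replicate_succ', List.append_assoc, List.singleton_append]
  exact noTripleHash_append_false_cons.mpr ⟨noTripleHash_replicate_false n, hh⟩

theorem lx1_le_lsafe : Lx1 ≤ Lsafe := by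
  refine kstar_le_of_mul_le_left one_le_lsafe (mul_le_lsafe le_rfl ?_)
  rintro _ rfl
  exact replicate_false_append_mem_lsafe (n := 2) two_pos (noTripleHash_replicate_false 0)

theorem ly1_le_lsafe : Ly1 ≤ Lsafe := by
  rintro _ (rfl | ⟨w, hw, rfl⟩)
  · exact one_le_lsafe rfl
  · refine ⟨?_, by simp⟩
    rw [show [false] ++ w ++ [false, true, false] = [] ++ false :: (w ++ false :: [true, false])
      by simp]
    exact noTripleHash_append_false_cons.mpr ⟨by decide,
      noTripleHash_append_false_cons.mpr ⟨hw, by decide⟩⟩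

theorem ly2_le_lsafe : Ly2 ≤ Lsafe := by
  rintro _ (rfl | ⟨a, b, c, hb, -, rfl⟩)
  · exact one_le_lsafe rfl
  · rw [show List.replicate 4 false ++ [true] ++ List.replicate 5 false ++
        List.replicate (2 * a) false ++ [true, true] ++ List.replicate b false ++
        [true] ++ List.replicate 4 false ++ List.replicate (2 + 2 * c) false =
        (List.replicate 4 false ++ [true]) ++ (List.replicate (5 + 2 * a) false ++ [true, true]) ++
        (List.replicate b false ++ [true]) ++ (List.replicate (6 + 2 * c) false ++ [])
      by simp [List.replicate_add]]
    exact append_mem_lsafe (append_mem_lsafe (append_mem_lsafe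
      (replicate_false_append_mem_lsafe (by omega) (by decide))
      (replicate_false_append_mem_lsafe (by omega) (by decide)))
      (replicate_false_append_mem_lsafe hb (by decide)))
      (replicate_false_append_mem_lsafe (by omega) (by decide))

theorem ly3_le_lsafe : Ly3 ≤ Lsafe := by
  rintro _ (rfl | ⟨w, hw, rfl⟩)
  · exact one_le_lsafe rfl
  · refine ⟨?_, by simp⟩
    rw [show [false, true, false] ++ w ++ [false] = [false, true] ++ false :: (w ++ false :: [])
      by simp]
    exact noTripleHash_append_false_cons.mpr ⟨by decide,
      noTripleHash_append_false_cons.mpr ⟨hw, by decide⟩⟩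

/-- No word producible by the counter-increase predicate contains `###` as a factor. -/
theorem counterIncrease_predicate_noTripleHash :
    ∀ w ∈ Ly1 * Lx1 * Ly2 * Lx1 * Ly3, NoTripleHash w := fun _ hw =>
  (mul_le_lsafe (mul_le_lsafe (mul_le_lsafe (mul_le_lsafe ly1_le_lsafe lx1_le_lsafe)
    ly2_le_lsafe) lx1_le_lsafe) ly3_le_lsafe hw).1
end
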